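/- Let S ≤ G₁ × ⋯ × Gₙ be a full subdirect product and fix i ∈ I. Assume that: (1) for each k ∈ I∖{i}, the quotient G_i / N_{{k}}^{(i)} is virtually abelian; and (2) for each nonempty J ⊆ I∖{i} and each finite-index subgroup K of U_J(1)^{(i)}, there is a finite-index subgroup H_K of G_i such that K ≤ H_K and ⁅H_K, H_K⁆ = ⁅K, K⁆. Then for every nonempty subset J ⊆ I∖{i}, the quotient G_i / N_J^{(i)} is virtually nilpotent. -/

import Mathlib

/-!
Write `γ_c(H) = H.lowerCentralSeries c` (so `γ_0(H) = H`, `γ_1(H) = ⁅H, H⁆`); it suffices to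
find a finite-index `H ≤ G_i` and `c` with `γ_c(H) ≤ N_J`. Induct on `J`. For `J = {k}` this
is hypothesis (1) with `c = 1`. Otherwise every `J \ {l}` is nonempty, and intersecting normal
cores of the subgroups given by induction yields one normal finite-index `D` and one `c` with
`γ_c(D) ≤ N_{J \ {l}}` for all `l ∈ J`. Let `K = D ⊓ U_J(1)`, normal in `G_i` and of finite index
in `U_J(1)`. As `⁅N_{J \ {l}}, N_{{l}}⁆ ≤ N_J` for each `l`, we get
`γ_{c+1}(K) ≤ ⁅γ_c(K), U_J(1)⁆ ≤ N_J`. Hypothesis (2) gives a finite-index `H ≥ K` with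
`⁅H, H⁆ = ⁅K, K⁆`, and the three subgroups lemma turns this into `γ_{r+1}(H) ≤ γ_{r+1}(K)` for
all `r`, since `K` is normal.
-/

/-- The kernel of the projection `p_J : S → ∏_{j ∈ J} G_j`, viewed as a subgroup of the
direct product: the elements of `S` whose coordinates in `J` are all trivial. -/
def projKer {n : ℕ} (G : Fin n → Type*) [∀ i, Group (G i)]
    (S : Subgroup (∀ i, G i)) (J : Finset (Fin n)) : Subgroup (∀ i, G i) :=
  S ⊓ ⨅ j ∈ J, (Pi.evalMonoidHom G j).ker

/-- `N_J^{(i)} = p_i (ker p_J)`, a subgroup of `G i`. -/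
def NJ {n : ℕ} (G : Fin n → Type*) [∀ i, Group (G i)]
    (S : Subgroup (∀ i, G i)) (i : Fin n) (J : Finset (Fin n)) : Subgroup (G i) :=
  (projKer G S J).map (Pi.evalMonoidHom G i)

/-- `U_J(1)^{(i)}`: the subgroup of `G i` generated by `⋃_{l ∈ J} N_{{l}}^{(i)}`. -/
def UJ {n : ℕ} (G : Fin n → Type*) [∀ i, Group (G i)]
    (S : Subgroup (∀ i, G i)) (i : Fin n) (J : Finset (Fin n)) : Subgroup (G i) :=
  ⨆ l ∈ J, NJ G S i {l}

/-- `G ⧸ N` is virtually nilpotent: there is a finite-index subgroup `H` of `G` containing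
`N` such that `H ⧸ N` is nilpotent, i.e. some term of the lower central series of `H`
is contained in `N`. -/
def QuotVirtuallyNilpotent {G : Type*} [Group G] (N : Subgroup G) : Prop :=
  ∃ H : Subgroup G, N ≤ H ∧ H.FiniteIndex ∧
    ∃ c : ℕ, ((⊤ : Subgroup H).lowerCentralSeries c).map H.subtype ≤ N

/-- `G ⧸ N` is virtually abelian: there is a finite-index subgroup `H` of `G` containing
`N` such that `H ⧸ N` is abelian, i.e. `⁅H, H⁆ ≤ N`. -/
def QuotVirtuallyAbelian {G : Type*} [Group G] (N : Subgroup G) : Prop :=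
  ∃ H : Subgroup G, N ≤ H ∧ H.FiniteIndex ∧ ⁅H, H⁆ ≤ N

open scoped commutatorElement

namespace Subgroup

variable {Γ : Type*} [Group Γ]

theorem le_iff_map_mk'_eq_bot {H N : Subgroup Γ} [N.Normal] :
    H ≤ N ↔ H.map (QuotientGroup.mk' N) = ⊥ := by
  rw [map_eq_bot_iff, QuotientGroup.ker_mk']

theorem commutator_le_iff_le_comap_centralizer {H K N : Subgroup Γ} [N.Normal] :
    ⁅H, K⁆ ≤ N ↔ K ≤ (centralizer (H.map (QuotientGroup.mk' N) : Set (Γ ⧸ N))).comap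
      (QuotientGroup.mk' N) := by
  rw [le_iff_map_mk'_eq_bot, map_commutator, commutator_comm,
    commutator_eq_bot_iff_le_centralizer, map_le_iff_le_comap]

/-- The three subgroups lemma modulo a normal subgroup. -/
theorem commutator_commutator_le_of_rotate {H₁ H₂ H₃ N : Subgroup Γ} [N.Normal]
    (h1 : ⁅⁅H₂, H₃⁆, H₁⁆ ≤ N) (h2 : ⁅⁅H₃, H₁⁆, H₂⁆ ≤ N) : ⁅⁅H₁, H₂⁆, H₃⁆ ≤ N := by
  simp only [le_iff_map_mk'_eq_bot, map_commutator] at *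
  exact commutator_commutator_eq_bot_of_rotate h1 h2

theorem commutator_lowerCentralSeries_le (K : Subgroup Γ) [K.Normal] (a b : ℕ) :
    ⁅K.lowerCentralSeries a, K.lowerCentralSeries b⁆ ≤ K.lowerCentralSeries (a + b + 1) := by
  induction b generalizing a with
  | zero => rfl
  | succ b ih =>
    rw [commutator_comm, lowerCentralSeries_succ]
    apply commutator_commutator_le_of_rotate
    · rw [commutator_comm K, ← lowerCentralSeries_succ]
      exact (ih (a + 1)).trans_eq (congrArg _ (by omega))
    · exact commutator_mono (ih a) le_rfl

theorem commutator_lowerCentralSeries_le_of_commutator_eq {K H : Subgroup Γ} [K.Normal]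
    (hKH : K ≤ H) (hc : ⁅H, H⁆ = ⁅K, K⁆) (r : ℕ) :
    ⁅K.lowerCentralSeries r, H⁆ ≤ K.lowerCentralSeries (r + 1) := by
  induction r with
  | zero => exact (commutator_mono hKH le_rfl).trans_eq hc
  | succ r ih =>
    rw [lowerCentralSeries_succ]
    apply commutator_commutator_le_of_rotate
    · calc ⁅⁅K, H⁆, K.lowerCentralSeries r⁆
          ≤ ⁅K.lowerCentralSeries 1, K.lowerCentralSeries r⁆ :=
            commutator_mono ((commutator_mono hKH le_rfl).trans_eq hc) le_rfl
        _ ≤ K.lowerCentralSeries (r + 1 + 1) :=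
            (K.commutator_lowerCentralSeries_le 1 r).trans_eq (congrArg _ (by omega))
    · rw [commutator_comm H]
      exact commutator_mono ih le_rfl

theorem lowerCentralSeries_succ_le_of_commutator_eq {K H : Subgroup Γ} [K.Normal]
    (hKH : K ≤ H) (hc : ⁅H, H⁆ = ⁅K, K⁆) (r : ℕ) :
    H.lowerCentralSeries (r + 1) ≤ K.lowerCentralSeries (r + 1) := by
  induction r with
  | zero => exact hc.le
  | succ r ih =>
    exact (commutator_mono ih le_rfl).trans
      (commutator_lowerCentralSeries_le_of_commutator_eq hKH hc (r + 1))

theorem lowerCentralSeries_sup_le {H N : Subgroup Γ} [N.Normal] {c : ℕ}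
    (h : H.lowerCentralSeries c ≤ N) : (H ⊔ N).lowerCentralSeries c ≤ N := by
  rw [le_iff_map_mk'_eq_bot] at h ⊢
  rwa [map_lowerCentralSeries, map_sup, le_iff_map_mk'_eq_bot.mp le_rfl, sup_bot_eq,
    ← map_lowerCentralSeries]

theorem lowerCentralSeries_le_of_le {H K : Subgroup Γ} (hHK : H ≤ K) {m n : ℕ} (hnm : n ≤ m) :
    H.lowerCentralSeries m ≤ K.lowerCentralSeries n :=
  (lowerCentralSeries_mono m hHK).trans (K.lowerCentralSeries_antitone hnm)

theorem exists_normal_finiteIndex_lowerCentralSeries_le {ι : Type*} {N : ι → Subgroup Γ}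
    (s : Finset ι)
    (h : ∀ l ∈ s, ∃ H : Subgroup Γ, H.FiniteIndex ∧ ∃ c, H.lowerCentralSeries c ≤ N l) :
    ∃ D : Subgroup Γ, D.Normal ∧ D.FiniteIndex ∧ ∃ c, ∀ l ∈ s, D.lowerCentralSeries c ≤ N l := by
  induction s using Finset.cons_induction with
  | empty => exact ⟨⊤, inferInstance, inferInstance, 0, by simp⟩
  | cons a s _ ih =>
    obtain ⟨H, hH, c, hHc⟩ := h a (s.mem_cons_self a)
    obtain ⟨D, hD, hDfi, d, hDd⟩ := ih fun l hl => h l (Finset.mem_cons_of_mem hl)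
    refine ⟨D ⊓ H.normalCore, inferInstance, inferInstance, max c d, ?_⟩
    rintro l hl
    rcases Finset.mem_cons.mp hl with rfl | hl
    · exact (lowerCentralSeries_le_of_le (inf_le_right.trans (normalCore_le H))
        (le_max_left c d)).trans hHc
    · exact (lowerCentralSeries_le_of_le inf_le_left (le_max_right c d)).trans (hDd l hl)

end Subgroup

theorem QuotVirtuallyNilpotent.of_lowerCentralSeries_le {Γ : Type*} [Group Γ]
    {N : Subgroup Γ} [N.Normal]
    (h : ∃ H : Subgroup Γ, H.FiniteIndex ∧ ∃ c, H.lowerCentralSeries c ≤ N) :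
    QuotVirtuallyNilpotent N := by
  obtain ⟨H, hH, c, hHc⟩ := h
  refine ⟨H ⊔ N, le_sup_right, Subgroup.finiteIndex_of_le le_sup_left, c, ?_⟩
  rw [Subgroup.top_subtype_lowerCentralSeries]
  exact Subgroup.lowerCentralSeries_sup_le hHc

section SubdirectProduct

variable {n : ℕ} {G : Fin n → Type*} [∀ i, Group (G i)] {S : Subgroup (∀ i, G i)}

theorem mem_NJ {i : Fin n} {J : Finset (Fin n)} {x : G i} :
    x ∈ NJ G S i J ↔ ∃ t ∈ S, (∀ j ∈ J, t j = 1) ∧ t i = x := by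
  simp [NJ, projKer, Subgroup.mem_iInf, and_assoc]

theorem NJ_normal {i : Fin n} (hsub : S.map (Pi.evalMonoidHom G i) = ⊤) (J : Finset (Fin n)) :
    (NJ G S i J).Normal := by
  constructor
  intro x hx g
  obtain ⟨t, htS, htJ, rfl⟩ := mem_NJ.mp hx
  obtain ⟨s, hsS, rfl⟩ := Subgroup.mem_map.mp (hsub ▸ Subgroup.mem_top g)
  refine mem_NJ.mpr ⟨s * t * s⁻¹, S.mul_mem (S.mul_mem hsS htS) (S.inv_mem hsS), ?_, rfl⟩
  intro j hj
  simp [htJ j hj]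

theorem commutator_NJ_le (i : Fin n) (A B : Finset (Fin n)) :
    ⁅NJ G S i A, NJ G S i B⁆ ≤ NJ G S i (A ∪ B) := by
  rw [Subgroup.commutator_le]
  intro x hx y hy
  obtain ⟨t, htS, htA, rfl⟩ := mem_NJ.mp hx
  obtain ⟨s, hsS, hsB, rfl⟩ := mem_NJ.mp hy
  refine mem_NJ.mpr ⟨⁅t, s⁆, S.commutator_le_self (Subgroup.commutator_mem_commutator htS hsS),
    fun j hj => ?_, rfl⟩
  rcases Finset.mem_union.mp hj with h | h
  · simp [commutatorElement_def, htA j h]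
  · simp [commutatorElement_def, hsB j h]

theorem UJ_normal {i : Fin n} (hsub : S.map (Pi.evalMonoidHom G i) = ⊤) (J : Finset (Fin n)) :
    (UJ G S i J).Normal :=
  have := fun l => NJ_normal hsub {l}
  inferInstanceAs (⨆ l ∈ J, NJ G S i {l}).Normal

theorem commutator_UJ_le {i : Fin n} {J : Finset (Fin n)} {X M : Subgroup (G i)} [M.Normal]
    (h : ∀ l ∈ J, ⁅X, NJ G S i {l}⁆ ≤ M) : ⁅X, UJ G S i J⁆ ≤ M := by
  simp only [Subgroup.commutator_le_iff_le_comap_centralizer] at h ⊢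
  exact iSup₂_le h

theorem commutator_UJ_le_NJ {i : Fin n} (hsub : S.map (Pi.evalMonoidHom G i) = ⊤)
    {J : Finset (Fin n)} {X : Subgroup (G i)} (hX : ∀ l ∈ J, X ≤ NJ G S i (J.erase l)) :
    ⁅X, UJ G S i J⁆ ≤ NJ G S i J := by
  have := NJ_normal hsub J
  refine commutator_UJ_le fun l hl => ?_
  calc ⁅X, NJ G S i {l}⁆ ≤ ⁅NJ G S i (J.erase l), NJ G S i {l}⁆ :=
        Subgroup.commutator_mono (hX l hl) le_rfl
    _ ≤ NJ G S i (J.erase l ∪ {l}) := commutator_NJ_le i _ _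
    _ = NJ G S i J := by rw [Finset.union_singleton, Finset.insert_erase hl]

theorem exists_lowerCentralSeries_le_NJ_of_erase {i : Fin n}
    (hsub : S.map (Pi.evalMonoidHom G i) = ⊤) {J : Finset (Fin n)}
    (hcomm : ∀ K : Subgroup (G i), K ≤ UJ G S i J → K.relIndex (UJ G S i J) ≠ 0 →
      ∃ H : Subgroup (G i), H.FiniteIndex ∧ K ≤ H ∧ ⁅H, H⁆ = ⁅K, K⁆)
    (h : ∀ l ∈ J, ∃ H : Subgroup (G i), H.FiniteIndex ∧ ∃ c,
      H.lowerCentralSeries c ≤ NJ G S i (J.erase l)) :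
    ∃ H : Subgroup (G i), H.FiniteIndex ∧ ∃ c, H.lowerCentralSeries c ≤ NJ G S i J := by
  obtain ⟨D, hD, hDfi, c, hDc⟩ := Subgroup.exists_normal_finiteIndex_lowerCentralSeries_le J h
  have := UJ_normal hsub J
  obtain ⟨H, hH, hKH, hHK⟩ := hcomm (D ⊓ UJ G S i J) inf_le_right
    (by rw [Subgroup.inf_relIndex_right]; exact Subgroup.FiniteIndex.index_ne_zero)
  refine ⟨H, hH, c + 1, (Subgroup.lowerCentralSeries_succ_le_of_commutator_eq hKH hHK c).trans ?_⟩
  refine (Subgroup.commutator_mono le_rfl inf_le_right).trans (commutator_UJ_le_NJ hsub ?_)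
  exact fun l hl => (Subgroup.lowerCentralSeries_le_of_le inf_le_left le_rfl).trans (hDc l hl)

end SubdirectProduct

theorem quotient_NJ_virtuallyNilpotent_general {n : ℕ}
    (G : Fin n → Type*) [∀ i, Group (G i)] (S : Subgroup (∀ i, G i))
    (hsubdirect : ∀ i, S.map (Pi.evalMonoidHom G i) = ⊤)
    (i : Fin n)
    (h1 : ∀ k : Fin n, k ≠ i → QuotVirtuallyAbelian (NJ G S i {k}))
    (h2 : ∀ J : Finset (Fin n), J.Nonempty → i ∉ J →
      ∀ K : Subgroup (G i), K ≤ UJ G S i J → K.relIndex (UJ G S i J) ≠ 0 →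
        ∃ H : Subgroup (G i), H.FiniteIndex ∧ K ≤ H ∧ ⁅H, H⁆ = ⁅K, K⁆) :
    ∀ J : Finset (Fin n), J.Nonempty → i ∉ J →
      QuotVirtuallyNilpotent (NJ G S i J) := by
  suffices key : ∀ J : Finset (Fin n), J.Nonempty → i ∉ J →
      ∃ H : Subgroup (G i), H.FiniteIndex ∧ ∃ c, H.lowerCentralSeries c ≤ NJ G S i J by
    intro J hJ hiJ
    have := NJ_normal (hsubdirect i) J
    exact .of_lowerCentralSeries_le (key J hJ hiJ)
  intro J
  induction J using Finset.strongInduction with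
  | H J ih =>
    intro hJ hiJ
    obtain ⟨k, rfl⟩ | hJ2 := hJ.exists_eq_singleton_or_nontrivial
    · obtain ⟨H, -, hH, hHH⟩ := h1 k (by simpa [eq_comm] using hiJ)
      exact ⟨H, hH, 1, hHH⟩
    · refine exists_lowerCentralSeries_le_NJ_of_erase (hsubdirect i) (h2 J hJ hiJ) fun l hl => ?_
      exact ih _ (Finset.erase_ssubset hl) hJ2.erase_nonempty (mt Finset.mem_of_mem_erase hiJ)

/-- Let `S` be a full subdirect product of `G₁ × ⋯ × Gₙ` and fix `i`.
If (1) `G_i ⧸ N_{{k}}^{(i)}` is virtually abelian for each `k ≠ i`, and (2) for each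
nonempty `J ⊆ I \ {i}` and each finite-index subgroup `K ≤ U_J(1)^{(i)}` there is a
finite-index subgroup `H_K ≤ G_i` with `K ≤ H_K` and `⁅H_K, H_K⁆ = ⁅K, K⁆`, then
`G_i ⧸ N_J^{(i)}` is virtually nilpotent for every nonempty `J ⊆ I \ {i}`. -/
theorem quotient_NJ_virtuallyNilpotent {n : ℕ} (hn : 2 ≤ n)
    (G : Fin n → Type*) [∀ i, Group (G i)] (S : Subgroup (∀ i, G i))
    (hsubdirect : ∀ i, S.map (Pi.evalMonoidHom G i) = ⊤)
    (hfull : ∀ i, S ⊓ (MonoidHom.mulSingle G i).range ≠ ⊥)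
    (i : Fin n)
    (h1 : ∀ k : Fin n, k ≠ i → QuotVirtuallyAbelian (NJ G S i {k}))
    (h2 : ∀ J : Finset (Fin n), J.Nonempty → i ∉ J →
      ∀ K : Subgroup (G i), K ≤ UJ G S i J → K.relIndex (UJ G S i J) ≠ 0 →
        ∃ H : Subgroup (G i), H.FiniteIndex ∧ K ≤ H ∧ ⁅H, H⁆ = ⁅K, K⁆) :
    ∀ J : Finset (Fin n), J.Nonempty → i ∉ J →
      QuotVirtuallyNilpotent (NJ G S i J) :=
  quotient_NJ_virtuallyNilpotent_general G S hsubdirect i h1 h2
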